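/- arXiv:1907.08581 — 2 statements merged into one kernel-verified Lean document; each statement's English description precedes it below -/
import Mathlib

section
/- Suppose ν = χ⁺ is a successor cardinal, ⟨A_{ξ,η} | ξ < ν, η < χ⟩ is an Ulam matrix over ν, α is an ordinal of cofinality ν, and φ : α → ν is a function such that some stationary s ⊆ α exists on which φ is strictly increasing and converging to ν (where stationarity of preimages is computed via a fixed normal function π_α : ν → α with club image, i.e., φ^{-1}[A] ∩ α is stationary means the preimage is stationary in α). Then there exist η < χ and a set x ∈ [ν]^ν such that, for all ξ ∈ x, the set φ^{-1}[A_{ξ,η}] ∩ α is stationary in α. -/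
open Cardinal Set Ordinal

/-- `C` is unbounded in `α`. -/
def UnbIn (C : Set Ordinal) (α : Ordinal) : Prop :=
  ∀ β < α, ∃ γ ∈ C, β < γ ∧ γ < α

/-- `C` is closed in `α`: every nonzero limit point of `C` below `α` belongs to `C`. -/
def ClosedIn (C : Set Ordinal) (α : Ordinal) : Prop :=
  ∀ β < α, 0 < β → UnbIn C β → β ∈ C

/-- `C` is a club (closed unbounded) subset of `α`. -/
def ClubIn (C : Set Ordinal) (α : Ordinal) : Prop :=
  C ⊆ Set.Iio α ∧ ClosedIn C α ∧ UnbIn C α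

/-- `S` is stationary in `α`. -/
def StatIn (S : Set Ordinal) (α : Ordinal) : Prop :=
  ∀ C, ClubIn C α → (S ∩ C).Nonempty

/-- The trace of `S` below `κ`: ordinals of uncountable cofinality in which `S` reflects. -/
def Tr (κ : Ordinal) (S : Set Ordinal) : Set Ordinal :=
  {β | β < κ ∧ Cardinal.aleph0 < β.cof ∧ StatIn (S ∩ Set.Iio β) β}

/-- `E^κ_θ`, the set of ordinals below `κ` of cofinality `θ`. -/
def Ecof (κ : Ordinal) (θ : Cardinal) : Set Ordinal :=
  {α | α < κ ∧ α.cof = θ}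

/-- The set of accumulation points of `C` that belong to `C`. -/
def accSet (C : Set Ordinal) : Set Ordinal :=
  {β ∈ C | 0 < β ∧ UnbIn C β}

/-- The order type of a set of ordinals: the unique ordinal whose initial segment
order-embeds onto the set. -/
noncomputable def otp (x : Set Ordinal) : Ordinal :=
  sInf {o : Ordinal | ∃ f : Ordinal → Ordinal,
    StrictMonoOn f (Set.Iio o) ∧ f '' Set.Iio o = x}

/-- The partition principle `Prt(S, θ, T)` (computed inside `κ`). -/
def Prt (κ : Ordinal) (S : Set Ordinal) (θ : Cardinal) (T : Set Ordinal) : Prop :=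
  ∃ P : Ordinal → Set Ordinal,
    (∀ i < θ.ord, P i ⊆ S) ∧
    Set.PairwiseDisjoint (Set.Iio θ.ord) P ∧
    (S ⊆ ⋃ i ∈ Set.Iio θ.ord, P i) ∧
    StatIn (T ∩ ⋂ i ∈ Set.Iio θ.ord, Tr κ (P i)) κ

/-- The principle `SNR⁻(κ, ν, T)`. -/
def SNRm (κ : Ordinal) (ν : Cardinal) (T : Set Ordinal) : Prop :=
  ∀ T₀ ⊆ T ∩ Ecof κ ν, StatIn T₀ κ →
    ∃ φ : Ordinal → Ordinal, (∀ β < κ, φ β < ν.ord) ∧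
      StatIn {α ∈ T₀ | ∃ c, ClubIn c α ∧ StrictMonoOn φ c} κ

/-- The simultaneous partition principle `Prp(S, ν, T)` (computed inside `κ`). -/
def Prp (κ : Ordinal) (S : Set Ordinal) (ν : Cardinal) (T : Set Ordinal) : Prop :=
  ∀ θ : Cardinal, θ ≤ ν →
    ∀ Si : Ordinal → Set Ordinal, (∀ i < θ.ord, Si i ⊆ S) →
      ∀ T' ⊆ T ∩ ⋂ i ∈ Set.Iio θ.ord, Tr κ (Si i), StatIn T' κ →
        ∃ I : Set Ordinal, I ⊆ Set.Iio θ.ord ∧ (∀ j < θ.ord, ∃ i ∈ I, j ≤ i) ∧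
          ∃ S' : Ordinal → Set Ordinal,
            (∀ i ∈ I, S' i ⊆ Si i) ∧
            (∀ i ∈ I, StatIn (S' i) κ) ∧
            Set.PairwiseDisjoint I S' ∧
            StatIn (T' ∩ ⋂ i ∈ I, Tr κ (S' i)) κ

/-- `⟨lams, f⟩` is a scale for the singular cardinal `lam`. -/
def IsScale (lam : Cardinal) (lams : Ordinal → Cardinal) (f : Ordinal → Ordinal → Ordinal) : Prop :=
  (∀ i < lam.ord.cof.ord, (lams i).IsRegular) ∧
  (∀ i < lam.ord.cof.ord, ∀ j < lam.ord.cof.ord, i < j → lams i < lams j) ∧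
  (∀ i < lam.ord.cof.ord, lams i < lam) ∧
  (∀ c < lam, ∃ i < lam.ord.cof.ord, c < lams i) ∧
  (∀ γ < (Order.succ lam).ord, ∀ i < lam.ord.cof.ord, f γ i < (lams i).ord) ∧
  (∀ γ < (Order.succ lam).ord, ∀ δ < (Order.succ lam).ord, γ < δ →
    ∃ i < lam.ord.cof.ord, ∀ j, i ≤ j → j < lam.ord.cof.ord → f γ j < f δ j) ∧
  (∀ g : Ordinal → Ordinal, (∀ i < lam.ord.cof.ord, g i < (lams i).ord) →
    ∃ γ < (Order.succ lam).ord, ∃ i < lam.ord.cof.ord,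
      ∀ j, i ≤ j → j < lam.ord.cof.ord → g j < f γ j)

/-- `α` is a very good point of the scale `f`. -/
def VeryGoodAt (lam : Cardinal) (f : Ordinal → Ordinal → Ordinal) (α : Ordinal) : Prop :=
  ∃ C, ClubIn C α ∧ ∃ i < lam.ord.cof.ord,
    ∀ γ ∈ C, ∀ δ ∈ C, γ < δ → ∀ j, i ≤ j → j < lam.ord.cof.ord → f γ j < f δ j

/-- The least size of a family of `θ`-sized subsets of `ν` such that every club
in `ν` contains a member of the family. -/
noncomputable def CC (ν θ : Cardinal) : Cardinal :=
  sInf { c : Cardinal | ∃ 𝒞 : Ordinal → Set Ordinal,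
    (∀ i < c.ord, 𝒞 i ⊆ Set.Iio ν.ord ∧ (otp (𝒞 i)).card = θ) ∧
    ∀ b, ClubIn b ν.ord → ∃ i < c.ord, 𝒞 i ⊆ b }

/-- `𝒟(ν, μ) = cf([ν]^μ, ⊇)`: the least size of a family of `μ`-sized subsets of `ν`
such that every `μ`-sized subset of `ν` contains a member of the family. -/
noncomputable def DD (ν μ : Cardinal) : Cardinal :=
  sInf { c : Cardinal | ∃ 𝒟 : Ordinal → Set Ordinal,
    (∀ i < c.ord, 𝒟 i ⊆ Set.Iio ν.ord ∧ (otp (𝒟 i)).card = μ) ∧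
    ∀ a : Set Ordinal, a ⊆ Set.Iio ν.ord → (otp a).card = μ → ∃ i < c.ord, 𝒟 i ⊆ a }


/-!
Fix a row `ξ`. All but at most `χ` points of `ν` lie in `⋃_{η<χ} A_{ξ,η}`, and `φ` is injective
on `s`, so at most `χ < cf α` points of `s` are sent outside this union; fewer than `cf α` points
form a bounded, hence nonstationary, set. Thus `s` is covered, up to a nonstationary set, by the
`χ` sets `φ⁻¹[A_{ξ,η}]`, and since the nonstationary ideal on `α` is `cf α`-complete one of them,
say the one with index `η(ξ)`, is stationary. As `ν = χ⁺` is regular, `ξ ↦ η(ξ)` is constant on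
a set of size `ν`.
-/

universe u v

open Order Set.Notation

theorem exists_strictMonoOn_image_Iio_eq {b : Ordinal.{u}} {x : Set Ordinal.{u}}
    (hx : x ⊆ Iio b) :
    ∃ o : Ordinal.{u}, ∃ f : Ordinal.{u} → Ordinal.{u},
      StrictMonoOn f (Iio o) ∧ f '' Iio o = x := by
  let y : Set b.ToType := {t | (ToType.mk.symm t : Ordinal) ∈ x}
  let e : Iio (typeLT y) ≃o y := OrderIso.ofRelIsoLT (enum (α := y) (· < ·))
  let g : Iio (typeLT y) → Ordinal := fun i ↦ ToType.mk.symm (e i).1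
  have hg : StrictMono g := fun i j hij ↦ ToType.mk.symm.strictMono (e.strictMono hij)
  refine ⟨typeLT y, Function.extend Subtype.val g 0, fun i hi j hj hij ↦ ?_, ?_⟩
  · rw [Subtype.val_injective.extend_apply g 0 ⟨i, hi⟩,
      Subtype.val_injective.extend_apply g 0 ⟨j, hj⟩]
    exact hg hij
  · ext β
    constructor
    · rintro ⟨i, hi, rfl⟩
      rw [Subtype.val_injective.extend_apply g 0 ⟨i, hi⟩]
      exact (e ⟨i, hi⟩).2
    · intro hβ
      obtain ⟨i, hi⟩ := e.surjective ⟨ToType.mk ⟨β, hx hβ⟩, by simpa [y] using hβ⟩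
      refine ⟨i, i.2, ?_⟩
      rw [Subtype.val_injective.extend_apply g 0 i]
      simp [g, hi]

theorem exists_strictMonoOn_image_Iio_otp {b : Ordinal.{u}} {x : Set Ordinal.{u}}
    (hx : x ⊆ Iio b) :
    ∃ f : Ordinal.{u} → Ordinal.{u}, StrictMonoOn f (Iio (otp x)) ∧ f '' Iio (otp x) = x :=
  csInf_mem (exists_strictMonoOn_image_Iio_eq hx)

theorem lift_card_otp {b : Ordinal.{u}} {x : Set Ordinal.{u}} (hx : x ⊆ Iio b) :
    Cardinal.lift.{u + 1, u} (otp x).card = #x := by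
  obtain ⟨f, hf, hfx⟩ := exists_strictMonoOn_image_Iio_otp hx
  conv_rhs => rw [← hfx]
  rw [mk_image_eq_of_injOn f _ hf.injOn, Cardinal.mk_Iio_ordinal]

theorem exists_otp_card_eq_of_isRegular {ν χ : Cardinal.{u}} (hν : ν.IsRegular)
    (hχν : χ < ν) (h : Ordinal.{u} → Ordinal.{u}) (hh : ∀ ξ < ν.ord, h ξ < χ.ord) :
    ∃ η < χ.ord, ∃ x ⊆ Iio ν.ord, (otp x).card = ν ∧ ∀ ξ ∈ x, h ξ = η := by
  have hmk : #(Iio ν.ord) = Cardinal.lift.{u + 1} ν := by rw [Cardinal.mk_Iio_ordinal, card_ord]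
  obtain ⟨⟨η, hη⟩, x, hxν, hνx, hx⟩ := infinite_pigeonhole_set (s := Iio ν.ord)
    (fun ξ ↦ (⟨h ξ, hh ξ ξ.2⟩ : Iio χ.ord)) (Cardinal.lift.{u + 1} ν) hmk.ge
    (by simpa using hν.aleph0_le)
    (by rw [Cardinal.mk_Iio_ordinal, card_ord, ← lift_ord, ← lift_cof, hν.cof_ord]
        exact Cardinal.lift_lt.2 hχν)
  refine ⟨η, hη, x, hxν, ?_, fun ξ hξ ↦ congrArg Subtype.val (hx hξ)⟩
  apply Cardinal.lift_inj.1
  rw [lift_card_otp hxν]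
  exact ((mk_le_mk_of_subset hxν).trans hmk.le).antisymm hνx

section Stationary

variable {T : Type u} [LinearOrder T]

theorem not_isStationary_of_mk_lt_cof {t : Set T} (ht : #t < Order.cof T) :
    ¬ IsStationary t := by
  obtain ⟨a, ha⟩ := not_isCofinal_iff.1 fun h ↦ (cof_le h).not_gt ht
  refine not_isStationary_iff.2 ⟨Ici a, ⟨(isUpperSet_Ici a).dirSupClosed, fun x ↦ ?_⟩, ?_⟩
  · exact ⟨max x a, le_max_right x a, le_max_left x a⟩
  · exact disjoint_left.2 fun x hx hax ↦ (ha x hx).not_ge hax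

theorem IsStationary.exists_isStationary_of_subset_iUnion_union [WellFoundedLT T] {ι : Type v}
    {s E : Set T} {P : ι → Set T} (hT : Order.cof T ≠ ℵ₀) (hs : IsStationary s)
    (hsub : s ⊆ (⋃ i, P i) ∪ E)
    (hι : Cardinal.lift.{u} #ι < Cardinal.lift.{v} (Order.cof T)) (hE : #E < Order.cof T) :
    ∃ i, IsStationary (P i) := by
  have h := hs.mono hsub
  rw [isStationary_union_iff hT, isStationary_iUnion_iff hT hι] at h
  exact h.resolve_right (not_isStationary_of_mk_lt_cof hE)

end Stationary

section StatIn

variable {α : Ordinal.{u}}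

theorem ClubIn.isClub_preimage {C : Set Ordinal.{u}} (hC : ClubIn C α) :
    IsClub (Iio α ↓∩ C) where
  dirSupClosed := by
    rw [dirSupClosed_iff_of_linearOrder]
    rintro d hdC ⟨x, hx⟩ a ha
    by_cases had : a ∈ d
    · exact hdC had
    have hlt : ∀ y ∈ d, y < a := fun y hy ↦ (ha.1 hy).lt_of_ne fun h ↦ had (h ▸ hy)
    refine hC.2.1 a a.2 (pos_of_gt (show x.1 < a.1 from hlt x hx)) fun β hβa ↦ ?_
    obtain ⟨y, hy, hβy⟩ : ∃ y ∈ d, β < y.1 := by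
      by_contra! h
      exact hβa.not_ge (ha.2 fun y hy ↦ (show y ≤ ⟨β, hβa.trans a.2⟩ from h y hy))
    exact ⟨y, hdC hy, hβy, hlt y hy⟩
  isCofinal a := by
    obtain ⟨γ, hγC, haγ, hγα⟩ := hC.2.2 a a.2
    exact ⟨⟨γ, hγα⟩, hγC, haγ.le⟩

theorem IsClub.clubIn_image (hα : IsSuccLimit α) {D : Set (Iio α)} (hD : IsClub D) :
    ClubIn (Subtype.val '' D) α := by
  refine ⟨image_subset_iff.2 fun x _ ↦ x.2, fun β hβα hβ0 hβ ↦ ?_, fun β hβα ↦ ?_⟩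
  · let d : Set (Iio α) := {x ∈ D | x.1 < β}
    have hlub : IsLUB d ⟨β, hβα⟩ := by
      refine ⟨fun x hx ↦ hx.2.le, fun b hb ↦ not_lt.1 fun hbβ ↦ ?_⟩
      obtain ⟨_, ⟨x, hx, rfl⟩, hbx, hxβ⟩ := hβ b.1 hbβ
      exact hbx.not_ge (hb ⟨hx, hxβ⟩)
    obtain ⟨_, ⟨x, hx, rfl⟩, -, hxβ⟩ := hβ 0 hβ0
    exact ⟨_, hD.isLUB_mem (t := d) (fun y hy ↦ hy.1) ⟨x, hx, hxβ⟩ hlub, rfl⟩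
  · obtain ⟨x, hx, hβx⟩ := hD.isCofinal (⟨succ β, hα.succ_lt hβα⟩ : Iio α)
    exact ⟨x, ⟨x, hx, rfl⟩, (lt_succ β).trans_le hβx, x.2⟩

theorem statIn_iff_isStationary (hα : IsSuccLimit α) {S : Set Ordinal.{u}} :
    StatIn S α ↔ IsStationary (Iio α ↓∩ S) := by
  constructor
  · intro hS D hD
    obtain ⟨_, hβS, x, hx, rfl⟩ := hS _ (hD.clubIn_image hα)
    exact ⟨x, hβS, hx⟩
  · intro hS C hC
    obtain ⟨x, hxS, hxC⟩ := hS hC.isClub_preimage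
    exact ⟨x, hxS, hxC⟩

theorem StatIn.inter_Iio {S : Set Ordinal.{u}} (hS : StatIn S α) : StatIn (S ∩ Iio α) α :=
  fun C hC ↦ (hS C hC).mono fun _ hβ ↦ ⟨⟨hβ.1, hC.1 hβ.2⟩, hβ.2⟩

theorem StatIn.exists_statIn_of_subset_iUnion_union {ι : Type v} (hα : ℵ₀ < α.cof)
    {s E : Set Ordinal.{u}} {P : ι → Set Ordinal.{u}} (hs : StatIn s α)
    (hsub : s ⊆ (⋃ i, P i) ∪ E) (hι : Cardinal.lift.{u} #ι < Cardinal.lift.{v} α.cof)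
    (hE : #E < Cardinal.lift.{u + 1} α.cof) : ∃ i, StatIn (P i) α := by
  have hlim : IsSuccLimit α := one_lt_cof_iff.1 (one_lt_aleph0.trans hα)
  have hcof : Order.cof (Iio α) = Cardinal.lift.{u + 1} α.cof := by rw [cof_Iio, lift_cof]
  simp only [statIn_iff_isStationary hlim] at hs ⊢
  refine hs.exists_isStationary_of_subset_iUnion_union (E := Iio α ↓∩ E) ?_
    (fun x hx ↦ by simpa using hsub hx) ?_ ?_
  · rw [hcof]
    simpa using (Cardinal.lift_strictMono.{u, u + 1} hα).ne'
  · rw [hcof]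
    simpa only [Cardinal.lift_lift, Cardinal.lift_umax] using
      Cardinal.lift_strictMono.{max u v, u + 1} hι
  · rw [hcof]
    exact (mk_preimage_of_injective _ _ Subtype.val_injective).trans_lt hE

theorem StatIn.exists_statIn_preimage {ι : Type v} (hα : ℵ₀ < α.cof) {s : Set Ordinal.{u}}
    (hs : StatIn s α) {φ : Ordinal.{u} → Ordinal.{u}} (hφ : InjOn φ s)
    {B : ι → Set Ordinal.{u}} (hι : Cardinal.lift.{u} #ι < Cardinal.lift.{v} α.cof)
    (hB : #(φ '' s \ ⋃ i, B i : Set Ordinal) < Cardinal.lift.{u + 1} α.cof) :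
    ∃ i, StatIn (φ ⁻¹' B i) α := by
  let E := {β ∈ s | φ β ∉ ⋃ i, B i}
  refine hs.exists_statIn_of_subset_iUnion_union hα (E := E) (fun β hβ ↦ ?_) hι ?_
  · by_cases h : φ β ∈ ⋃ i, B i
    · exact Or.inl (by simpa using h)
    · exact Or.inr ⟨hβ, h⟩
  · rw [← mk_image_eq_of_injOn φ E (hφ.mono fun _ hβ ↦ hβ.1)]
    refine (mk_le_mk_of_subset ?_).trans_lt hB
    rintro _ ⟨β, ⟨hβ, h⟩, rfl⟩
    exact ⟨mem_image_of_mem φ hβ, h⟩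

end StatIn

theorem exists_statIn_preimage_of_otp_compl_le {χ ν : Cardinal.{u}} {α : Ordinal.{u}}
    (hα : ℵ₀ < α.cof) (hχα : χ < α.cof) {B : Ordinal.{u} → Set Ordinal.{u}}
    (hB : (otp (Iio ν.ord \ ⋃ η ∈ Iio χ.ord, B η)).card ≤ χ)
    {φ : Ordinal.{u} → Ordinal.{u}} (hφ : ∀ β < α, φ β < ν.ord)
    {s : Set Ordinal.{u}} (hs : s ⊆ Iio α) (hstat : StatIn s α) (hinj : InjOn φ s) :
    ∃ η < χ.ord, StatIn ({β | φ β ∈ B η} ∩ Iio α) α := by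
  have hsub : φ '' s \ ⋃ η : Iio χ.ord, B η ⊆ Iio ν.ord \ ⋃ η ∈ Iio χ.ord, B η := by
    rintro _ ⟨⟨β, hβ, rfl⟩, hβB⟩
    exact ⟨hφ β (hs hβ), by simpa using hβB⟩
  have hsmall : #(φ '' s \ ⋃ η : Iio χ.ord, B η : Set Ordinal) < Cardinal.lift.{u + 1} α.cof :=
    calc _ ≤ #(Iio ν.ord \ ⋃ η ∈ Iio χ.ord, B η : Set Ordinal) := mk_le_mk_of_subset hsub
      _ = Cardinal.lift.{u + 1} (otp (Iio ν.ord \ ⋃ η ∈ Iio χ.ord, B η)).card :=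
        (lift_card_otp sdiff_subset).symm
      _ ≤ Cardinal.lift.{u + 1} χ := Cardinal.lift_le.2 hB
      _ < Cardinal.lift.{u + 1} α.cof := Cardinal.lift_lt.2 hχα
  have hι : Cardinal.lift.{u} #(Iio χ.ord) < Cardinal.lift.{u + 1} α.cof := by
    simpa only [Cardinal.mk_Iio_ordinal, card_ord, Cardinal.lift_lift, Cardinal.lift_lt] using hχα
  obtain ⟨⟨η, hη⟩, h⟩ := hstat.exists_statIn_preimage hα hinj hι hsmall
  exact ⟨η, hη, h.inter_Iio⟩

theorem statement4_general (χ ν : Cardinal) (hχ : Cardinal.aleph0 ≤ χ) (hν : ν = Order.succ χ)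
    (A : Ordinal → Ordinal → Set Ordinal)
    (hUlam1 : ∀ ξ < ν.ord, (otp (Set.Iio ν.ord \ ⋃ η ∈ Set.Iio χ.ord, A ξ η)).card ≤ χ)
    (α : Ordinal) (hα : α.cof = ν)
    (φ : Ordinal → Ordinal) (hφ : ∀ β < α, φ β < ν.ord)
    (s : Set Ordinal) (hs : s ⊆ Set.Iio α) (hstat : StatIn s α)
    (hmono : StrictMonoOn φ s) :
    ∃ η < χ.ord, ∃ x : Set Ordinal, x ⊆ Set.Iio ν.ord ∧ (otp x).card = ν ∧
      ∀ ξ ∈ x, StatIn ({β | φ β ∈ A ξ η} ∩ Set.Iio α) α := by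
  have hχν : χ < ν := hν ▸ lt_succ χ
  have hreg : ν.IsRegular := hν ▸ isRegular_succ hχ
  have hαcof : ℵ₀ < α.cof := hα ▸ hχ.trans_lt hχν
  have hrow : ∀ ξ < ν.ord, ∃ η < χ.ord, StatIn ({β | φ β ∈ A ξ η} ∩ Iio α) α :=
    fun ξ hξ ↦ exists_statIn_preimage_of_otp_compl_le hαcof (hα ▸ hχν) (hUlam1 ξ hξ) hφ hs
      hstat hmono.injOn
  choose! η hηχ hηstat using hrow
  obtain ⟨η₀, hη₀, x, hxν, hx, hxη⟩ := exists_otp_card_eq_of_isRegular hreg hχν η hηχ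
  exact ⟨η₀, hη₀, x, hxν, hx, fun ξ hξ ↦ hxη ξ hξ ▸ hηstat ξ (hxν hξ)⟩

theorem statement4 (χ ν : Cardinal) (hχ : Cardinal.aleph0 ≤ χ) (hν : ν = Order.succ χ)
    (A : Ordinal → Ordinal → Set Ordinal)
    (hAsub : ∀ ξ < ν.ord, ∀ η < χ.ord, A ξ η ⊆ Set.Iio ν.ord)
    (hUlam1 : ∀ ξ < ν.ord, (otp (Set.Iio ν.ord \ ⋃ η ∈ Set.Iio χ.ord, A ξ η)).card ≤ χ)
    (hUlam2 : ∀ η < χ.ord, ∀ ξ < ν.ord, ∀ ξ' < ν.ord, ξ ≠ ξ' → Disjoint (A ξ η) (A ξ' η))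
    (α : Ordinal) (hα : α.cof = ν)
    (φ : Ordinal → Ordinal) (hφ : ∀ β < α, φ β < ν.ord)
    (s : Set Ordinal) (hs : s ⊆ Set.Iio α) (hstat : StatIn s α)
    (hmono : StrictMonoOn φ s) (hconv : ∀ γ < ν.ord, ∃ β ∈ s, γ < φ β) :
    ∃ η < χ.ord, ∃ x : Set Ordinal, x ⊆ Set.Iio ν.ord ∧ (otp x).card = ν ∧
      ∀ ξ ∈ x, StatIn ({β | φ β ∈ A ξ η} ∩ Set.Iio α) α :=
  statement4_general χ ν hχ hν A hUlam1 α hα φ hφ s hs hstat hmono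
end

section
/- Suppose μ < θ < λ are infinite regular cardinals, and there exists a partial square sequence ⟨C_α | α ∈ Γ⟩ with Γ ⊆ acc(λ⁺), each C_α a club in α, coherent (C_{ᾱ} = C_α ∩ ᾱ for ᾱ ∈ acc(C_α), with ᾱ ∈ Γ), such that T₁ := {α ∈ Γ ∩ T | otp(C_α) = θ} is stationary in λ⁺, where T ⊆ E^{λ⁺}_θ. Then Prt(E^{λ⁺}_μ, θ, T) holds: there is a partition ⟨S_i | i < θ⟩ of E^{λ⁺}_μ such that T ∩ ⋂_{i<θ} Tr(S_i) is stationary. -/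
/-!
Split `E^θ_μ` into `θ` pairwise disjoint stationary subsets `A i` of `θ` (Solovay: fix cofinal
sequences of length `μ`, find a coordinate whose values are stationarily unbounded, and press
down with Fodor), and colour `β ∈ E^{λ⁺}_μ` by the `i` with `otp (C β) ∈ A i`. For `α` in the
stationary set `T₁`, let `e` enumerate `C α` in order type `θ`. The preimage under `e` of a club
of `α` is a club of `θ`, so it meets `A i` at some `ξ`; then `β = e ξ` is an accumulation point
of `C α` of cofinality `μ` with `otp (C α ∩ β) = ξ`, and coherence gives `C β = C α ∩ β`. So
every colour class reflects at every point of `T₁`.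
-/

open Cardinal Set Ordinal

open Order

universe u

variable {C D S : Set Ordinal.{u}} {α β x y z : Ordinal.{u}}

noncomputable def nextIn (C : Set Ordinal) (y : Ordinal) : Ordinal :=
  sInf (C ∩ Ioi y)

theorem UnbIn.nextIn_mem (hC : UnbIn C α) (hy : y < α) : nextIn C y ∈ C ∩ Ioo y α := by
  obtain ⟨γ, hγ, hyγ, hγα⟩ := hC y hy
  have hmem : nextIn C y ∈ C ∩ Ioi y := csInf_mem (⟨γ, hγ, hyγ⟩ : (C ∩ Ioi y).Nonempty)
  have hle : nextIn C y ≤ γ := csInf_le' ⟨hγ, hyγ⟩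
  exact ⟨hmem.1, hmem.2, hle.trans_lt hγα⟩

theorem clubIn_Ioo (hα : IsSuccLimit α) (hx : x < α) : ClubIn (Ioo x α) α := by
  refine ⟨fun _ h => h.2, fun β hβ hβ0 hU => ?_, fun y hy => ?_⟩
  · obtain ⟨γ, hγ, -, hγβ⟩ := hU 0 hβ0
    exact ⟨hγ.1.trans hγβ, hβ⟩
  · have h := hα.succ_lt (max_lt hy hx)
    exact show ∃ γ ∈ Ioo x α, y < γ ∧ γ < α from
      ⟨succ (max y x), ⟨(le_max_right y x).trans_lt (lt_succ _), h⟩,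
        (le_max_left y x).trans_lt (lt_succ _), h⟩

theorem StatIn.mono (hS : StatIn S α) (h : S ⊆ D) : StatIn D α :=
  fun E hE => (hS E hE).mono (inter_subset_inter_left _ h)

theorem exists_clubIn_disjoint_of_not_statIn (h : ¬ StatIn S α) :
    ∃ D, ClubIn D α ∧ Disjoint S D := by
  simp only [StatIn, not_forall, not_nonempty_iff_eq_empty, exists_prop] at h
  obtain ⟨D, hD, hSD⟩ := h
  exact ⟨D, hD, disjoint_iff_inter_eq_empty.2 hSD⟩

theorem iterate_lt_of_forall_lt {F : Ordinal → Ordinal} (hF : ∀ y < α, F y < α) (hx : x < α)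
    (n : ℕ) : F^[n] x < α := by
  induction n with
  | zero => exact hx
  | succ n ih => rw [Function.iterate_succ_apply']; exact hF _ ih

theorem exists_gt_apply_lt_nfp {F : Ordinal → Ordinal} (hF : ∀ y < α, y < F y ∧ F y < α)
    (hx : x < α) (hz : z < nfp F x) : ∃ y, z < y ∧ y < α ∧ F y < nfp F x := by
  obtain ⟨n, hn⟩ := lt_nfp_iff.1 hz
  have hlt := iterate_lt_of_forall_lt (fun y hy => (hF y hy).2) hx
  refine ⟨F^[n] x, hn, hlt n, ?_⟩
  calc F (F^[n] x) = F^[n + 1] x := (Function.iterate_succ_apply' F n x).symm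
    _ < F^[n + 2] x := by
      rw [Function.iterate_succ_apply' F (n + 1)]; exact (hF _ (hlt _)).1
    _ ≤ nfp F x := iterate_le_nfp F x _

theorem ClubIn.inter (hα : ℵ₀ < α.cof) (hC : ClubIn C α) (hD : ClubIn D α) :
    ClubIn (C ∩ D) α := by
  refine ⟨fun _ h => hC.1 h.1, fun β hβ hβ0 hU => ⟨?_, ?_⟩, fun x hx => ?_⟩
  · exact hC.2.1 β hβ hβ0 fun z hz => (hU z hz).imp fun _ h => ⟨h.1.1, h.2⟩
  · exact hD.2.1 β hβ hβ0 fun z hz => (hU z hz).imp fun _ h => ⟨h.1.2, h.2⟩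
  -- the iterates of `F` from `x` alternate between `C` and `D`, so their supremum lies in both
  set F := fun y => nextIn D (nextIn C y)
  have hF : ∀ y < α, nextIn C y ∈ C ∩ Ioo y α ∧ F y ∈ D ∩ Ioo (nextIn C y) α := fun y hy =>
    have h := hC.2.2.nextIn_mem hy
    ⟨h, hD.2.2.nextIn_mem h.2.2⟩
  have hF' : ∀ y < α, y < F y ∧ F y < α := fun y hy =>
    ⟨(hF y hy).1.2.1.trans (hF y hy).2.2.1, (hF y hy).2.2.2⟩
  have hxl : x < nfp F x := (hF' x hx).1.trans_le (iterate_le_nfp F x 1)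
  have hlα : nfp F x < α := nfp_lt_ord hα (fun y hy => (hF' y hy).2) hx
  have hl0 : 0 < nfp F x := (zero_le (a := x)).trans_lt hxl
  refine ⟨nfp F x, ⟨hC.2.1 _ hlα hl0 fun z hz => ?_, hD.2.1 _ hlα hl0 fun z hz => ?_⟩, hxl, hlα⟩
  · obtain ⟨y, hzy, hy, hFy⟩ := exists_gt_apply_lt_nfp hF' hx hz
    exact ⟨nextIn C y, (hF y hy).1.1, hzy.trans (hF y hy).1.2.1,
      (hF y hy).2.2.1.trans hFy⟩
  · obtain ⟨y, hzy, hy, hFy⟩ := exists_gt_apply_lt_nfp hF' hx hz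
    exact ⟨F y, (hF y hy).2.1, hzy.trans (hF' y hy).1, hFy⟩

theorem iSup_Iio_lt_ord {θ : Cardinal.{u}} (hθ : θ.IsRegular) (hy : y < θ.ord)
    {f : Iio y → Ordinal.{u}} (hf : ∀ γ, f γ < θ.ord) : ⨆ γ, f γ < θ.ord := by
  refine Ordinal.lift_iSup_lt_of_lt_cof ?_ hf
  rw [Cardinal.mk_Iio_ordinal, ← Ordinal.lift_cof, hθ.cof_ord, Cardinal.lift_lift, Cardinal.lift_lt]
  exact Cardinal.lt_ord.1 hy

theorem clubIn_diagInter {θ : Cardinal.{u}} (hθ : θ.IsRegular) (hθω : ℵ₀ < θ)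
    {Cs : Ordinal.{u} → Set Ordinal.{u}} (hCs : ∀ γ < θ.ord, ClubIn (Cs γ) θ.ord) :
    ClubIn {β | β < θ.ord ∧ ∀ γ < β, β ∈ Cs γ} θ.ord := by
  refine ⟨fun _ h => h.1, fun β hβ hβ0 hU => ⟨hβ, fun γ hγ => ?_⟩, fun x hx => ?_⟩
  · refine (hCs γ (hγ.trans hβ)).2.1 β hβ hβ0 fun z hz => ?_
    obtain ⟨δ, hδ, hzδ, hδβ⟩ := hU (max z γ) (max_lt hz hγ)
    exact ⟨δ, hδ.2 γ ((le_max_right z γ).trans_lt hzδ), (le_max_left z γ).trans_lt hzδ, hδβ⟩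
  -- the supremum of the iterates of `F` is a limit point of every `Cs γ` with `γ` below it
  set F := fun y => succ (max y (⨆ γ : Iio y, nextIn (Cs γ) y))
  have hnext : ∀ y < θ.ord, ∀ γ < y, nextIn (Cs γ) y ∈ Cs γ ∩ Ioo y θ.ord :=
    fun y hy γ hγ => (hCs γ (hγ.trans hy)).2.2.nextIn_mem hy
  have hnextF : ∀ y < θ.ord, ∀ γ < y, nextIn (Cs γ) y < F y := fun y _ γ hγ =>
    ((Ordinal.le_iSup (fun γ : Iio y => nextIn (Cs γ) y) ⟨γ, hγ⟩).trans
      (le_max_right _ _)).trans_lt (lt_succ _)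
  have hF : ∀ y < θ.ord, y < F y ∧ F y < θ.ord := fun y hy =>
    ⟨(le_max_left _ _).trans_lt (lt_succ _), (isSuccLimit_ord hθ.aleph0_le).succ_lt
      (max_lt hy (iSup_Iio_lt_ord hθ hy fun γ => (hnext y hy γ γ.2).2.2))⟩
  have hcof : ℵ₀ < θ.ord.cof := by rwa [hθ.cof_ord]
  have hxl : x < nfp F x := (hF x hx).1.trans_le (iterate_le_nfp F x 1)
  have hlθ : nfp F x < θ.ord := nfp_lt_ord hcof (fun y hy => (hF y hy).2) hx
  refine ⟨nfp F x, ⟨hlθ, fun γ hγ => ?_⟩, hxl, hlθ⟩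
  refine (hCs γ (hγ.trans hlθ)).2.1 _ hlθ ((zero_le (a := x)).trans_lt hxl) fun z hz => ?_
  obtain ⟨y, hy, hyθ, hFy⟩ := exists_gt_apply_lt_nfp hF hx (max_lt hz hγ)
  have hγy : γ < y := (le_max_right z γ).trans_lt hy
  exact ⟨nextIn (Cs γ) y, (hnext y hyθ γ hγy).1,
    ((le_max_left z γ).trans_lt hy).trans (hnext y hyθ γ hγy).2.1,
    (hnextF y hyθ γ hγy).trans hFy⟩

theorem exists_statIn_fiber_of_regressive {θ : Cardinal.{u}} (hθ : θ.IsRegular) (hθω : ℵ₀ < θ)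
    (hS : StatIn S θ.ord) {f : Ordinal.{u} → Ordinal.{u}} (hf : ∀ β ∈ S, f β < β) :
    ∃ γ < θ.ord, StatIn {β ∈ S | f β = γ} θ.ord := by
  by_contra! h
  choose! Cs hCs hdisj using fun γ hγ => exists_clubIn_disjoint_of_not_statIn (h γ hγ)
  obtain ⟨β, hβS, hβθ, hβΔ⟩ := hS _ (clubIn_diagInter hθ hθω hCs)
  exact (hdisj (f β) ((hf β hβS).trans hβθ)).notMem_of_mem_left ⟨hβS, rfl⟩
    (hβΔ (f β) (hf β hβS))

theorem otp_eq_of_strictMonoOn {f : Ordinal.{u} → Ordinal.{u}} {o : Ordinal.{u}}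
    (hf : StrictMonoOn f (Iio o)) (hx : f '' Iio o = C) : otp C = o := by
  have huniq : ∀ o' ∈ {o' : Ordinal | ∃ g : Ordinal → Ordinal,
      StrictMonoOn g (Iio o') ∧ g '' Iio o' = C}, o' = o := by
    rintro o' ⟨g, hg, hgx⟩
    let e : Iio o' ≃o Iio o := (hg.orderIso g _).trans
      ((OrderIso.setCongr _ _ (hgx.trans hx.symm)).trans (hf.orderIso f _).symm)
    apply Ordinal.lift_inj.{u + 1, u}.1
    rw [← type_lt_Iio, ← type_lt_Iio]
    exact e.toRelIsoLT.ordinalType_congr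
  have hmem : o ∈ {o' : Ordinal | ∃ g : Ordinal → Ordinal,
      StrictMonoOn g (Iio o') ∧ g '' Iio o' = C} := ⟨f, hf, hx⟩
  rw [otp, eq_singleton_iff_unique_mem.2 ⟨hmem, huniq⟩, csInf_singleton]

theorem not_bddAbove_union_Ici : ¬ BddAbove (C ∪ Ici α) :=
  fun h => not_bddAbove_Ici α (h.mono subset_union_right)

theorem image_enumOrd_union_Ici_otp (hC : C ⊆ Iio α) :
    enumOrd (C ∪ Ici α) '' Iio (otp C) = C := by
  have hunb : ¬ BddAbove (C ∪ Ici α) := not_bddAbove_union_Ici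
  have hmono := enumOrd_strictMono hunb
  obtain ⟨o, ho⟩ := enumOrd_surjective hunb (Or.inr (mem_Ici.2 le_rfl) : α ∈ C ∪ Ici α)
  have himage : enumOrd (C ∪ Ici α) '' Iio o = C := by
    ext z
    constructor
    · rintro ⟨ξ, hξ, rfl⟩
      have hlt : enumOrd (C ∪ Ici α) ξ < α := (hmono hξ).trans_eq ho
      exact (enumOrd_mem hunb ξ).resolve_right hlt.not_ge
    · intro hz
      obtain ⟨ξ, rfl⟩ := enumOrd_surjective hunb (Or.inl hz : z ∈ C ∪ Ici α)
      exact ⟨ξ, hmono.lt_iff_lt.1 ((hC hz).trans_eq ho.symm), rfl⟩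
  rwa [otp_eq_of_strictMonoOn (hmono.strictMonoOn _) himage]

theorem ClubIn.isNormal_enumOrd_union_Ici (hC : ClubIn C α) : IsNormal (enumOrd (C ∪ Ici α)) := by
  refine Ordinal.isNormal_enumOrd (fun t ht ht0 hbdd => ?_) not_bddAbove_union_Ici
  rcases le_or_gt α (sSup t) with hαt | htα
  · exact Or.inr hαt
  by_cases hmem : sSup t ∈ t
  · exact ht hmem
  have hlt : ∀ w ∈ t, w < sSup t := fun w hw =>
    (le_csSup hbdd hw).lt_of_ne fun h => hmem (h ▸ hw)
  have hmemC : ∀ w ∈ t, w ∈ C := fun w hw =>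
    (ht hw).resolve_right ((hlt w hw).trans htα).not_ge
  obtain ⟨w, hw⟩ := ht0
  refine Or.inl (hC.2.1 _ htα ((zero_le (a := w)).trans_lt (hlt w hw)) fun z hz => ?_)
  obtain ⟨v, hv, hzv⟩ := exists_lt_of_lt_csSup ⟨w, hw⟩ hz
  exact ⟨v, hmemC v hv, hzv, hlt v hv⟩

theorem isSuccLimit_of_unbIn (h0 : 0 < β) (hU : UnbIn C β) : IsSuccLimit β := by
  refine Ordinal.isSuccLimit_iff.2 ⟨h0.ne', isSuccPrelimit_of_succ_lt fun x hx => ?_⟩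
  obtain ⟨γ, -, hxγ, hγβ⟩ := hU x hx
  exact (succ_le_of_lt hxγ).trans_lt hγβ

theorem enumOrd_union_Ici_lt {θ : Cardinal.{u}} (hθ : θ.IsRegular) (hD : UnbIn D θ.ord)
    {ξ : Ordinal.{u}} (hξ : ξ < θ.ord) : enumOrd (D ∪ Ici θ.ord) ξ < θ.ord := by
  induction ξ using WellFoundedLT.induction with
  | _ ξ IH =>
    set s := ⨆ η : Iio ξ, enumOrd (D ∪ Ici θ.ord) η
    have hs : s < θ.ord := iSup_Iio_lt_ord hθ hξ fun η => IH η η.2 (η.2.trans hξ)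
    have hnext := hD.nextIn_mem hs
    refine (enumOrd_le_of_forall_lt (Or.inl hnext.1) fun η hη => ?_).trans_lt hnext.2.2
    exact (Ordinal.le_iSup (fun η : Iio ξ => enumOrd (D ∪ Ici θ.ord) η) ⟨η, hη⟩).trans_lt
      hnext.2.1

theorem statIn_Ecof {μ θ : Cardinal.{u}} (hμ : μ.IsRegular) (hθ : θ.IsRegular) (hμθ : μ < θ) :
    StatIn (Ecof θ.ord μ) θ.ord := by
  intro D hD
  have hlt := enumOrd_union_Ici_lt hθ hD.2.2 (Cardinal.ord_lt_ord.2 hμθ)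
  refine ⟨_, ⟨hlt, ?_⟩, (enumOrd_mem not_bddAbove_union_Ici μ.ord).resolve_right hlt.not_ge⟩
  rw [cof_map_of_isNormal hD.isNormal_enumOrd_union_Ici (isSuccLimit_ord hμ.aleph0_le),
    hμ.cof_ord]

theorem ClubIn.clubIn_preimage_enumOrd (hC : ClubIn C α) (hD : ClubIn D α) (hDC : D ⊆ C) :
    ClubIn {ζ | ζ < otp C ∧ enumOrd (C ∪ Ici α) ζ ∈ D} (otp C) := by
  set e := enumOrd (C ∪ Ici α)
  have he := hC.isNormal_enumOrd_union_Ici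
  have himage : e '' Iio (otp C) = C := image_enumOrd_union_Ici_otp hC.1
  refine ⟨fun _ h => h.1, fun ζ hζ hζ0 hU => ⟨hζ, ?_⟩, fun x hx => ?_⟩
  · have heζ : e ζ ∈ C := himage ▸ mem_image_of_mem e hζ
    refine hD.2.1 _ (hC.1 heζ) ((zero_le (a := e 0)).trans_lt (he.strictMono hζ0)) fun z hz => ?_
    obtain ⟨η, hηζ, hzη⟩ := (he.lt_iff_exists_lt (isSuccLimit_of_unbIn hζ0 hU)).1 hz
    obtain ⟨ζ', hζ', hηζ', hζ'ζ⟩ := hU η hηζ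
    exact ⟨e ζ', hζ'.2, hzη.trans (he.strictMono hηζ'), he.strictMono hζ'ζ⟩
  · have hex : e x ∈ C := himage ▸ mem_image_of_mem e hx
    obtain ⟨d, hd, hxd, -⟩ := hD.2.2 (e x) (hC.1 hex)
    obtain ⟨ζ, hζ, rfl⟩ := himage.symm ▸ hDC hd
    exact ⟨ζ, ⟨hζ, hd⟩, he.strictMono.lt_iff_lt.1 hxd, hζ⟩

theorem ClubIn.statIn_setOf_otp_mem (hα : ℵ₀ < α.cof) (hC : ClubIn C α) {μ : Cardinal.{u}}
    (hμ : ℵ₀ ≤ μ) {A : Set Ordinal.{u}} (hA : A ⊆ Ecof (otp C) μ) (hAst : StatIn A (otp C)) :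
    StatIn {β ∈ accSet C | β.cof = μ ∧ otp (C ∩ Iio β) ∈ A} α := by
  intro D hD
  set e := enumOrd (C ∪ Ici α)
  have he := hC.isNormal_enumOrd_union_Ici
  have himage : e '' Iio (otp C) = C := image_enumOrd_union_Ici_otp hC.1
  obtain ⟨ξ, hξA, hξo, hξD, hξC⟩ :=
    hAst _ (hC.clubIn_preimage_enumOrd (hD.inter hα hC) inter_subset_right)
  have hξ : IsSuccLimit ξ := Ordinal.one_lt_cof_iff.1 (one_lt_aleph0.trans_le ((hA hξA).2 ▸ hμ))
  have hCe : C ∩ Iio (e ξ) = e '' Iio ξ := by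
    rw [← himage]
    ext z
    constructor
    · rintro ⟨⟨η, -, rfl⟩, hηξ⟩
      exact ⟨η, he.strictMono.lt_iff_lt.1 hηξ, rfl⟩
    · rintro ⟨η, hηξ, rfl⟩
      exact ⟨mem_image_of_mem e (lt_trans hηξ hξo), he.strictMono hηξ⟩
  refine ⟨e ξ, ⟨⟨hξC, ?_, fun z hz => ?_⟩, ?_, ?_⟩, hξD⟩
  · exact (zero_le (a := e 0)).trans_lt (he.strictMono hξ.pos)
  · obtain ⟨η, hηξ, hzη⟩ := (he.lt_iff_exists_lt hξ).1 hz
    exact ⟨e η, himage ▸ mem_image_of_mem e (lt_trans hηξ hξo), hzη, he.strictMono hηξ⟩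
  · rw [cof_map_of_isNormal he hξ, (hA hξA).2]
  · rwa [hCe, otp_eq_of_strictMonoOn (he.strictMono.strictMonoOn _) rfl]

theorem exists_cofinal_seq {ξ : Ordinal.{u}} {μ : Cardinal.{u}} (h : ξ.cof = μ) :
    ∃ f : Iio μ.ord → Ordinal.{u}, (∀ i, f i < ξ) ∧ ∀ η < ξ, ∃ i, η ≤ f i := by
  obtain ⟨f, hf⟩ := exists_isFundamentalSeq (o := ξ) (a := μ.ord) (by rw [h])
  refine ⟨fun i => f i, fun i => (f i).2, fun η hη => ?_⟩
  obtain ⟨_, ⟨i, rfl⟩, hi⟩ := hf.isCofinal_range ⟨η, hη⟩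
  exact ⟨i, hi⟩

theorem exists_index_statIn_le {μ θ : Cardinal.{u}} (hθ : θ.IsRegular) (hθω : ℵ₀ < θ)
    (hμθ : μ < θ) (hS : StatIn S θ.ord) {g : Ordinal.{u} → Iio μ.ord → Ordinal.{u}}
    (hg : ∀ ξ ∈ S, ∀ η < ξ, ∃ i, η ≤ g ξ i) :
    ∃ i, ∀ η < θ.ord, StatIn {ξ ∈ S | η ≤ g ξ i} θ.ord := by
  by_contra! h
  choose η hη hns using h
  choose D hD hdisj using fun i => exists_clubIn_disjoint_of_not_statIn (hns i)
  have hθl : IsSuccLimit θ.ord := isSuccLimit_ord hθ.aleph0_le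
  have hμθ' : μ.ord < θ.ord := Cardinal.ord_lt_ord.2 hμθ
  set η₀ := ⨆ i : Iio μ.ord, η i
  have hη₀ : η₀ < θ.ord := iSup_Iio_lt_ord hθ hμθ' hη
  set Cs := fun γ => if h : γ < μ.ord then D ⟨γ, h⟩ else Ioo 0 θ.ord
  have hCs : ∀ γ < θ.ord, ClubIn (Cs γ) θ.ord := fun γ _ => by
    by_cases h : γ < μ.ord
    · simpa only [Cs, dif_pos h] using hD ⟨γ, h⟩
    · simpa only [Cs, dif_neg h] using clubIn_Ioo hθl hθl.pos
  have hclub := (clubIn_diagInter hθ hθω hCs).inter (by rwa [hθ.cof_ord])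
    (clubIn_Ioo hθl (max_lt hμθ' hη₀))
  obtain ⟨ξ, hξS, ⟨-, hξΔ⟩, hξ, -⟩ := hS _ hclub
  obtain ⟨i, hi⟩ := hg ξ hξS η₀ ((le_max_right _ _).trans_lt hξ)
  have hiξ : (i : Ordinal) < ξ := (mem_Iio.1 i.2).trans_le (le_max_left _ _) |>.trans hξ
  have hξD : ξ ∈ D i := by
    simpa only [Cs, dif_pos (mem_Iio.1 i.2), Subtype.coe_eta] using hξΔ i hiξ
  exact (hdisj i).notMem_of_mem_left ⟨hξS, (Ordinal.le_iSup η i).trans hi⟩ hξD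

theorem unbIn_setOf_statIn_fiber {θ : Cardinal.{u}} (hθ : θ.IsRegular) (hθω : ℵ₀ < θ)
    {g : Ordinal.{u} → Ordinal.{u}} (hg : ∀ ξ ∈ S, g ξ < ξ)
    (hS : ∀ η < θ.ord, StatIn {ξ ∈ S | η ≤ g ξ} θ.ord) :
    UnbIn {γ | StatIn {ξ ∈ S | g ξ = γ} θ.ord} θ.ord := by
  intro η hη
  have hθl : IsSuccLimit θ.ord := isSuccLimit_ord hθ.aleph0_le
  obtain ⟨γ, hγ, hst⟩ := exists_statIn_fiber_of_regressive hθ hθω (hS _ (hθl.succ_lt hη))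
    fun ξ hξ => hg ξ hξ.1
  obtain ⟨ξ, ⟨⟨-, hle⟩, rfl⟩, -⟩ := hst _ (clubIn_Ioo hθl hθl.pos)
  exact ⟨g ξ, hst.mono fun ζ hζ => ⟨hζ.1.1, hζ.2⟩, (lt_succ η).trans_le hle, hγ⟩

theorem exists_coloring_of_unbIn {θ : Cardinal.{u}} (hθ : θ.IsRegular) {κ : Ordinal.{u}}
    {g : Ordinal.{u} → Ordinal.{u}} (hG : UnbIn {γ | StatIn {ξ ∈ S | g ξ = γ} κ} θ.ord) :
    ∃ c : Ordinal.{u} → Ordinal.{u}, (∀ ξ, c ξ < θ.ord) ∧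
      ∀ i < θ.ord, StatIn {ξ ∈ S | c ξ = i} κ := by
  set G := {γ | StatIn {ξ ∈ S | g ξ = γ} κ}
  set w := enumOrd (G ∪ Ici θ.ord)
  have hw := enumOrd_strictMono (not_bddAbove_union_Ici (C := G) (α := θ.ord))
  -- `c` inverts `w` on `Iio θ.ord`, with the junk value `0` off its range
  refine ⟨fun ξ => sInf {i | i < θ.ord ∧ w i = g ξ}, fun ξ => ?_, fun i hi => ?_⟩
  · beta_reduce
    rcases eq_empty_or_nonempty {i | i < θ.ord ∧ w i = g ξ} with h | h
    · rw [h, Ordinal.sInf_empty]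
      exact (isSuccLimit_ord hθ.aleph0_le).pos
    · exact (csInf_mem h).1
  · have hwi : w i < θ.ord := enumOrd_union_Ici_lt hθ hG hi
    have hst := (enumOrd_mem not_bddAbove_union_Ici i).resolve_right hwi.not_ge
    refine hst.mono fun ξ hξ => ⟨hξ.1, ?_⟩
    beta_reduce
    have : {j | j < θ.ord ∧ w j = g ξ} = {i} :=
      eq_singleton_iff_unique_mem.2 ⟨⟨hi, hξ.2.symm⟩, fun j hj => hw.injective (hj.2.trans hξ.2)⟩
    rw [this, csInf_singleton]

theorem exists_coloring_Ecof {μ θ : Cardinal.{u}} (hμ : μ.IsRegular) (hθ : θ.IsRegular)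
    (hμθ : μ < θ) : ∃ c : Ordinal.{u} → Ordinal.{u}, (∀ ξ, c ξ < θ.ord) ∧
      ∀ i < θ.ord, StatIn {ξ ∈ Ecof θ.ord μ | c ξ = i} θ.ord := by
  have hθω : ℵ₀ < θ := hμ.aleph0_le.trans_lt hμθ
  choose! fs hfs using fun ξ (hξ : ξ ∈ Ecof θ.ord μ) => exists_cofinal_seq hξ.2
  obtain ⟨i, hi⟩ := exists_index_statIn_le hθ hθω hμθ (statIn_Ecof hμ hθ hμθ)
    fun ξ hξ => (hfs ξ hξ).2
  exact exists_coloring_of_unbIn hθ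
    (unbIn_setOf_statIn_fiber hθ hθω (fun ξ hξ => (hfs ξ hξ).1 i) hi)

theorem prt_of_coloring {κ : Ordinal.{u}} {S T : Set Ordinal.{u}} {θ : Cardinal.{u}}
    (d : Ordinal.{u} → Ordinal.{u}) (hd : ∀ β ∈ S, d β < θ.ord)
    (h : StatIn (T ∩ ⋂ i ∈ Iio θ.ord, Tr κ {β ∈ S | d β = i}) κ) : Prt κ S θ T :=
  ⟨fun i => {β ∈ S | d β = i}, fun _ _ _ hβ => hβ.1,
    fun _ _ _ _ hij => disjoint_left.2 fun _ hi hj => hij (hi.2.symm.trans hj.2),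
    fun β hβ => mem_biUnion (hd β hβ) ⟨hβ, rfl⟩, h⟩

theorem statement5_general (μ θ lam : Cardinal)
    (hμ : μ.IsRegular) (hθ : θ.IsRegular)
    (hμθ : μ < θ)
    (Γ : Set Ordinal) (C : Ordinal → Set Ordinal)
    (hclub : ∀ α ∈ Γ, ClubIn (C α) α)
    (hcoh : ∀ α ∈ Γ, ∀ β ∈ accSet (C α), β ∈ Γ ∧ C β = C α ∩ Set.Iio β)
    (T : Set Ordinal) (hT : T ⊆ Ecof (Order.succ lam).ord θ)
    (hT1 : StatIn {α ∈ Γ ∩ T | otp (C α) = θ.ord} (Order.succ lam).ord) :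
    Prt (Order.succ lam).ord (Ecof (Order.succ lam).ord μ) θ T := by
  obtain ⟨c, hc, hcst⟩ := exists_coloring_Ecof hμ hθ hμθ
  refine prt_of_coloring (fun β => c (otp (C β))) (fun β _ => hc _) (hT1.mono ?_)
  rintro α ⟨⟨hαΓ, hαT⟩, hotp⟩
  have hαcof : ℵ₀ < α.cof := (hT hαT).2 ▸ hμ.aleph0_le.trans_lt hμθ
  refine ⟨hαT, mem_iInter₂.2 fun i hi => ⟨(hT hαT).1, hαcof, ?_⟩⟩
  have hA : {ξ ∈ Ecof θ.ord μ | c ξ = i} ⊆ Ecof (otp (C α)) μ := hotp ▸ fun _ hξ => hξ.1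
  refine ((hclub α hαΓ).statIn_setOf_otp_mem hαcof hμ.aleph0_le hA
    (hotp ▸ hcst i hi)).mono ?_
  rintro β ⟨hβacc, hβcof, -, hβi⟩
  have hβα : β < α := (hclub α hαΓ).1 hβacc.1
  refine ⟨⟨⟨hβα.trans (hT hαT).1, hβcof⟩, ?_⟩, hβα⟩
  rw [(hcoh α hαΓ β hβacc).2]
  exact hβi

theorem statement5 (μ θ lam : Cardinal)
    (hμ : μ.IsRegular) (hθ : θ.IsRegular) (hlam : lam.IsRegular)
    (hμθ : μ < θ) (hθlam : θ < lam)
    (Γ : Set Ordinal) (C : Ordinal → Set Ordinal)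
    (hΓ : Γ ⊆ {α | α < (Order.succ lam).ord ∧ Order.IsSuccLimit α})
    (hclub : ∀ α ∈ Γ, ClubIn (C α) α)
    (hcoh : ∀ α ∈ Γ, ∀ β ∈ accSet (C α), β ∈ Γ ∧ C β = C α ∩ Set.Iio β)
    (T : Set Ordinal) (hT : T ⊆ Ecof (Order.succ lam).ord θ)
    (hT1 : StatIn {α ∈ Γ ∩ T | otp (C α) = θ.ord} (Order.succ lam).ord) :
    Prt (Order.succ lam).ord (Ecof (Order.succ lam).ord μ) θ T :=
  statement5_general μ θ lam hμ hθ hμθ Γ C hclub hcoh T hT hT1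
end
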